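/- arXiv:2111.07591 — 2 statements merged into one kernel-verified Lean document; each statement's English description precedes it below -/
import Mathlib

section
/- Let n ≥ 2 and let C_D ⊆ ℝ^n be the cone generated by the vectors e_i − e_j and e_i + e_j for 1 ≤ i < j ≤ n. Call a vector Ξ ∈ ℝ^n D_n-dominant if Ξ_1 ≥ Ξ_2 ≥ ⋯ ≥ Ξ_{n−1} ≥ |Ξ_n|, and for such Ξ set Ξ⁺ := (Ξ_1, …, Ξ_{n−1}, |Ξ_n|). If Ξ and Ξ' are D_n-dominant and Ξ' − Ξ ∈ C_D, then Ξ'⁺ − Ξ⁺ ∈ C_D; moreover, if in addition Ξ⁺ = Ξ'⁺, then Ξ = Ξ'. -/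
/-- The first `k` entries' partial sum of a vector in `ℝ^n`. -/
def psum {n : ℕ} (v : Fin n → ℝ) (k : ℕ) : ℝ :=
  ∑ i : Fin n, if (i : ℕ) < k then v i else 0

/-- Membership in the cone `C_D ⊆ ℝ^n` generated by the vectors `e i - e j` and
`e i + e j` for `i < j`, i.e. being a nonnegative linear combination of them. -/
def inConeD (n : ℕ) (v : Fin n → ℝ) : Prop :=
  ∃ a b : Fin n → Fin n → ℝ,
    (∀ i j, 0 ≤ a i j) ∧ (∀ i j, 0 ≤ b i j) ∧
    v = ∑ i : Fin n, ∑ j : Fin n,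
      (if i < j then
        a i j • (Pi.single i (1 : ℝ) - Pi.single j 1) +
          b i j • (Pi.single i (1 : ℝ) + Pi.single j 1)
      else 0)

/-- `Ξ⁺ = (Ξ_1, …, Ξ_{n-1}, |Ξ_n|)`.  A vector `Ξ` is `D_n`-dominant
(`Ξ_1 ≥ ⋯ ≥ Ξ_{n-1} ≥ |Ξ_n|`) iff `plusMap n Ξ` is antitone. -/
def plusMap (n : ℕ) (Ξ : Fin n → ℝ) : Fin n → ℝ :=
  fun i => if (i : ℕ) = n - 1 then |Ξ i| else Ξ i

lemma mem_segment_neg_self_of_abs_le {x y : ℝ} (h : |y| ≤ |x|) : y ∈ segment ℝ (-x) x := by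
  rcases abs_cases x with ⟨hx, hx0⟩ | ⟨hx, hx0⟩
  · rw [segment_eq_Icc (by linarith)]
    exact abs_le.mp (hx ▸ h)
  · rw [segment_symm, segment_eq_Icc (by linarith)]
    constructor <;> linarith [abs_le.mp (hx ▸ h)]

-- The involution `θ` of the paper.
def flipLast (n : ℕ) : (Fin (n + 1) → ℝ) →ₗ[ℝ] Fin (n + 1) → ℝ :=
  LinearMap.pi fun i => if i = Fin.last n then -LinearMap.proj i else LinearMap.proj i

variable {n : ℕ}

lemma flipLast_apply (v : Fin (n + 1) → ℝ) (i : Fin (n + 1)) :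
    flipLast n v i = if i = Fin.last n then -v i else v i := by
  unfold flipLast
  split_ifs <;> simp [*]

lemma flipLast_single (i : Fin (n + 1)) :
    flipLast n (Pi.single i 1) = if i = Fin.last n then -Pi.single i 1 else Pi.single i 1 := by
  ext k
  by_cases hk : k = i <;> split_ifs <;> simp_all [flipLast_apply]

namespace inConeD

lemma add {v w : Fin n → ℝ} (hv : inConeD n v) (hw : inConeD n w) : inConeD n (v + w) := by
  obtain ⟨a, b, ha, hb, rfl⟩ := hv
  obtain ⟨a', b', ha', hb', rfl⟩ := hw
  refine ⟨a + a', b + b', fun i j => add_nonneg (ha i j) (ha' i j),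
    fun i j => add_nonneg (hb i j) (hb' i j), ?_⟩
  simp only [← Finset.sum_add_distrib, ite_add_ite, add_zero, Pi.add_apply, add_smul]
  congr! 3
  abel

lemma smul {c : ℝ} (hc : 0 ≤ c) {v : Fin n → ℝ} (hv : inConeD n v) : inConeD n (c • v) := by
  obtain ⟨a, b, ha, hb, rfl⟩ := hv
  refine ⟨c • a, c • b, fun i j => mul_nonneg hc (ha i j), fun i j => mul_nonneg hc (hb i j), ?_⟩
  simp only [Finset.smul_sum, smul_ite, smul_zero, smul_add, Pi.smul_apply, smul_smul, smul_eq_mul]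

lemma sum_nonneg {v : Fin n → ℝ} (hv : inConeD n v) : 0 ≤ ∑ k, v k := by
  obtain ⟨a, b, ha, hb, rfl⟩ := hv
  simp only [Finset.sum_apply]
  rw [Finset.sum_comm]
  refine Finset.sum_nonneg fun i _ => ?_
  rw [Finset.sum_comm]
  refine Finset.sum_nonneg fun j _ => ?_
  split_ifs
  · simpa [Finset.sum_add_distrib, ← Finset.mul_sum] using hb i j
  · simp

lemma map_flipLast {v : Fin (n + 1) → ℝ} (hv : inConeD (n + 1) v) :
    inConeD (n + 1) (flipLast n v) := by
  obtain ⟨a, b, ha, hb, rfl⟩ := hv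
  refine ⟨fun i j => if j = Fin.last n then b i j else a i j,
    fun i j => if j = Fin.last n then a i j else b i j,
    fun i j => ite_nonneg (hb i j) (ha i j), fun i j => ite_nonneg (ha i j) (hb i j), ?_⟩
  simp only [map_sum]
  refine Finset.sum_congr rfl fun i _ => Finset.sum_congr rfl fun j _ => ?_
  split_ifs with hij hj
  · have hi : i ≠ Fin.last n := (hij.trans_le (Fin.le_last j)).ne
    simp only [map_add, map_smul, map_sub, flipLast_single, hi, hj, if_false, if_true]
    rw [sub_neg_eq_add, ← sub_eq_add_neg]
    exact add_comm _ _
  · have hi : i ≠ Fin.last n := (hij.trans_le (Fin.le_last j)).ne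
    simp only [map_add, map_smul, map_sub, flipLast_single, hi, hj, if_false]
  · simp

lemma of_abs_last_le {v w : Fin (n + 1) → ℝ} (hv : inConeD (n + 1) v)
    (hw : ∀ i ≠ Fin.last n, w i = v i) (hlast : |w (Fin.last n)| ≤ |v (Fin.last n)|) :
    inConeD (n + 1) w := by
  obtain ⟨s, t, hs, ht, hst, hl⟩ := mem_segment_neg_self_of_abs_le hlast
  have hw' : w = s • flipLast n v + t • v := by
    funext i
    by_cases hi : i = Fin.last n
    · subst hi
      simp [flipLast_apply, ← hl]
    · simp [flipLast_apply, hi, hw i hi, ← add_mul, hst]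
  rw [hw']
  exact (hv.map_flipLast.smul hs).add (hv.smul ht)

lemma eq_zero_of_forall_ne_last {v : Fin (n + 1) → ℝ} (hv : inConeD (n + 1) v)
    (h : ∀ i ≠ Fin.last n, v i = 0) : v = 0 := by
  have sum_eq_last : ∀ u : Fin (n + 1) → ℝ, (∀ i ≠ Fin.last n, u i = 0) →
      ∑ k, u k = u (Fin.last n) :=
    fun u hu => Finset.sum_eq_single _ (fun i _ hi => hu i hi) (by simp)
  have hpos := hv.sum_nonneg
  have hneg := hv.map_flipLast.sum_nonneg
  rw [sum_eq_last v h] at hpos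
  rw [sum_eq_last _ fun i hi => by simp [flipLast_apply, hi, h i hi], flipLast_apply,
    if_pos rfl] at hneg
  funext i
  by_cases hi : i = Fin.last n
  · subst hi
    simp only [Pi.zero_apply]
    linarith
  · exact h i hi

end inConeD

lemma plusMap_last (Ξ : Fin (n + 1) → ℝ) :
    plusMap (n + 1) Ξ (Fin.last n) = |Ξ (Fin.last n)| := by
  simp [plusMap]

lemma plusMap_of_ne_last (Ξ : Fin (n + 1) → ℝ) {i : Fin (n + 1)} (hi : i ≠ Fin.last n) :
    plusMap (n + 1) Ξ i = Ξ i := by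
  unfold plusMap
  rw [if_neg]
  simpa [Fin.ext_iff] using hi

theorem stmt0_general (n : ℕ) (Ξ Ξ' : Fin n → ℝ)
    (h : inConeD n (Ξ' - Ξ)) :
    inConeD n (plusMap n Ξ' - plusMap n Ξ) ∧
      (plusMap n Ξ = plusMap n Ξ' → Ξ = Ξ') := by
  rcases n with _ | n
  · exact ⟨Subsingleton.elim (Ξ' - Ξ) (plusMap 0 Ξ' - plusMap 0 Ξ) ▸ h,
      fun _ => Subsingleton.elim _ _⟩
  refine ⟨h.of_abs_last_le (fun i hi => ?_) ?_, fun heq => ?_⟩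
  · simp [plusMap_of_ne_last _ hi]
  · simpa [plusMap_last] using abs_abs_sub_abs_le_abs_sub (Ξ' (Fin.last n)) (Ξ (Fin.last n))
  · refine (sub_eq_zero.mp (h.eq_zero_of_forall_ne_last fun i hi => ?_)).symm
    simpa [plusMap_of_ne_last _ hi, sub_eq_zero] using (congrFun heq i).symm

theorem stmt0 (n : ℕ) (hn : 2 ≤ n) (Ξ Ξ' : Fin n → ℝ)
    (hΞ : Antitone (plusMap n Ξ)) (hΞ' : Antitone (plusMap n Ξ'))
    (h : inConeD n (Ξ' - Ξ)) :
    inConeD n (plusMap n Ξ' - plusMap n Ξ) ∧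
      (plusMap n Ξ = plusMap n Ξ' → Ξ = Ξ') :=
  stmt0_general n Ξ Ξ' h
end

section
/- Let n_1 ≥ 1 and n_2 ≥ 0. Let μ, μ' ∈ ℝ^{n_1} be nonincreasing vectors, and let ν, ν' ∈ ℝ^{n_2} be nonincreasing vectors with all entries nonnegative. Assume: (i) for every 1 ≤ k ≤ n_1, Σ_{i=1}^k μ_i ≤ Σ_{i=1}^k μ'_i, with equality when k = n_1; and (ii) for every 1 ≤ k ≤ n_2, Σ_{i=1}^k ν_i ≤ Σ_{i=1}^k ν'_i. Let Ξ (respectively Ξ') be the nonincreasing vector in ℝ^{n_1+n_2} whose multiset of entries is {|μ_1|, …, |μ_{n_1}|} ⊎ {ν_1, …, ν_{n_2}} (respectively {|μ'_1|, …, |μ'_{n_1}|} ⊎ {ν'_1, …, ν'_{n_2}}). Then Σ_{i=1}^k Ξ_i ≤ Σ_{i=1}^k Ξ'_i for every 1 ≤ k ≤ n_1+n_2; moreover, if Ξ = Ξ', then μ = μ' and ν = ν'. -/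
/-- The multiset of entries of a vector in `ℝ^n`. -/
def entries {n : ℕ} (v : Fin n → ℝ) : Multiset ℝ :=
  Finset.univ.val.map v

/-!
Write `excess v t = ∑ i, (v i - t)⁺`. For a nonincreasing `v`, `excess v t` is the maximum over `k`
of `psum v k - k t`, so domination of partial sums is equivalent to a pointwise inequality of excess
functions, and the latter is additive over unions of multisets of entries. For `t ≥ 0`,
`(|x| - t)⁺ = (x - t)⁺ + (x + t)⁺ - (x + t)`, so the excess of `|μ|` is the excess of `μ` at `t` and
at `-t`, corrected by the total sum `∑ μ`, which is the same for `μ` and `μ'`. Hence the excess of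
`Ξ` is dominated by that of `Ξ'`, which gives the partial sum inequalities. If `Ξ = Ξ'` then each of
the dominated pieces is an equality, which forces equality of all partial sums of `μ, μ'` and of
`ν, ν'`.
-/

open Finset

noncomputable def excess {n : ℕ} (v : Fin n → ℝ) (t : ℝ) : ℝ :=
  ∑ i, (v i - t)⁺

section PartialSums

variable {n : ℕ}

lemma psum_zero (v : Fin n → ℝ) : psum v 0 = 0 := by
  simp [psum]

lemma psum_self (v : Fin n → ℝ) : psum v n = ∑ i, v i :=
  sum_congr rfl fun i _ => if_pos i.isLt

lemma psum_succ (v : Fin n → ℝ) (i : Fin n) : psum v (i + 1 : ℕ) = psum v i + v i := by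
  rw [psum, psum, ← Fintype.sum_ite_eq' i v, ← sum_add_distrib]
  refine sum_congr rfl fun j _ => ?_
  rcases lt_trichotomy (j : ℕ) i with h | h | h
  · simp [h, Nat.lt_succ_of_lt h, Fin.ne_of_lt h]
  · simp [Fin.ext h]
  · simp [h.not_gt, (Nat.succ_le_of_lt h).not_gt, Fin.ne_of_gt h]

lemma psum_le_psum_of_forall_one_le {v w : Fin n → ℝ}
    (h : ∀ k, 1 ≤ k → k ≤ n → psum v k ≤ psum w k) (k : ℕ) (hk : k ≤ n) :
    psum v k ≤ psum w k := by
  rcases Nat.eq_zero_or_pos k with rfl | hk₀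
  · simp [psum_zero]
  · exact h k hk₀ hk

lemma eq_of_psum_eq {v w : Fin n → ℝ} (h : ∀ k ≤ n, psum v k = psum w k) : v = w :=
  funext fun i => by
    linarith [psum_succ v i, psum_succ w i, h i i.isLt.le, h (i + 1) i.isLt]

lemma sum_ite_val_lt_const {k : ℕ} (hk : k ≤ n) (t : ℝ) :
    ∑ i : Fin n, (if (i : ℕ) < k then t else 0) = k * t := by
  rw [← sum_filter, sum_const, Fin.card_filter_val_lt, min_eq_right hk, nsmul_eq_mul]

lemma Antitone.exists_threshold {α : Type*} [LinearOrder α] {v : Fin n → α} (hv : Antitone v)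
    (t : α) : ∃ k ≤ n, (∀ i : Fin n, (i : ℕ) < k → t ≤ v i) ∧
      ∀ i : Fin n, k ≤ (i : ℕ) → v i ≤ t := by
  classical
  have hP : ∃ k, ∀ i : Fin n, k ≤ (i : ℕ) → v i ≤ t :=
    ⟨n, fun i hi => absurd i.isLt (by omega)⟩
  refine ⟨Nat.find hP, Nat.find_min' hP fun i hi => absurd i.isLt (by omega), fun i hi => ?_,
    Nat.find_spec hP⟩
  obtain ⟨j, hij, hj⟩ : ∃ j : Fin n, (i : ℕ) ≤ j ∧ t < v j := by
    simpa using Nat.find_min hP hi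
  exact hj.le.trans (hv (Fin.le_def.2 hij))

end PartialSums

section Excess

variable {n : ℕ}

lemma psum_le_mul_add_excess (v : Fin n → ℝ) (t : ℝ) {k : ℕ} (hk : k ≤ n) :
    psum v k ≤ k * t + excess v t := by
  rw [← sum_ite_val_lt_const hk t, psum, excess, ← sum_add_distrib]
  refine sum_le_sum fun i _ => ?_
  split_ifs
  · linarith [le_posPart (v i - t)]
  · linarith [posPart_nonneg (v i - t)]

lemma excess_eq_psum_sub_mul (v : Fin n → ℝ) {t : ℝ} {k : ℕ} (hk : k ≤ n)
    (hlo : ∀ i : Fin n, (i : ℕ) < k → t ≤ v i) (hhi : ∀ i : Fin n, k ≤ (i : ℕ) → v i ≤ t) :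
    excess v t = psum v k - k * t := by
  rw [← sum_ite_val_lt_const hk t, psum, excess, ← sum_sub_distrib]
  refine sum_congr rfl fun i _ => ?_
  split_ifs with hi
  · exact posPart_of_nonneg (sub_nonneg.2 (hlo i hi))
  · rw [posPart_of_nonpos (sub_nonpos.2 (hhi i (not_lt.1 hi))), sub_zero]

lemma excess_le_excess_of_psum_le {v w : Fin n → ℝ} (hv : Antitone v)
    (hps : ∀ k ≤ n, psum v k ≤ psum w k) (t : ℝ) : excess v t ≤ excess w t := by
  obtain ⟨k, hk, hlo, hhi⟩ := hv.exists_threshold t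
  linarith [excess_eq_psum_sub_mul v hk hlo hhi, hps k hk, psum_le_mul_add_excess w t hk]

lemma excess_apply_self {v : Fin n → ℝ} (hv : Antitone v) (i : Fin n) :
    excess v (v i) = psum v (i + 1 : ℕ) - ((i + 1 : ℕ) : ℝ) * v i :=
  excess_eq_psum_sub_mul v i.isLt (fun _ hj => hv (Fin.le_def.2 (Nat.lt_succ_iff.1 hj)))
    fun _ hj => hv (Fin.le_def.2 (Nat.le_of_succ_le hj))

lemma psum_succ_le_of_excess_le {v w : Fin n → ℝ} (hw : Antitone w) (i : Fin n)
    (h : excess v (w i) ≤ excess w (w i)) : psum v (i + 1 : ℕ) ≤ psum w (i + 1 : ℕ) := by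
  linarith [psum_le_mul_add_excess v (w i) i.isLt, excess_apply_self hw i]

lemma eq_of_psum_le_of_excess_le {v w : Fin n → ℝ} (hv : Antitone v)
    (hps : ∀ k ≤ n, psum v k ≤ psum w k) (hex : ∀ i, excess w (v i) ≤ excess v (v i)) :
    v = w :=
  eq_of_psum_eq fun k hk => by
    rcases k with _ | k
    · simp [psum_zero]
    · exact (hps _ hk).antisymm (psum_succ_le_of_excess_le hv ⟨k, hk⟩ (hex _))

lemma posPart_abs_sub {t : ℝ} (ht : 0 ≤ t) (x : ℝ) :
    (|x| - t)⁺ = (x - t)⁺ + (x - -t)⁺ - (x + t) := by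
  rcases le_total t x with h | h
  · rw [abs_of_nonneg (ht.trans h), posPart_of_nonneg (sub_nonneg.2 h),
      posPart_of_nonneg (by linarith : 0 ≤ x - -t)]
    ring
  rcases le_total (-t) x with h' | h'
  · rw [posPart_of_nonpos (by linarith [abs_le.2 ⟨h', h⟩]), posPart_of_nonpos (by linarith),
      posPart_of_nonneg (by linarith)]
    ring
  · rw [abs_of_nonpos (by linarith), posPart_of_nonneg (by linarith),
      posPart_of_nonpos (by linarith : x - t ≤ 0), posPart_of_nonpos (by linarith : x - -t ≤ 0)]
    ring

lemma excess_abs (v : Fin n → ℝ) {t : ℝ} (ht : 0 ≤ t) :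
    excess (fun i => |v i|) t = excess v t + excess v (-t) - (∑ i, v i + n * t) := by
  simp only [excess, posPart_abs_sub ht, sum_sub_distrib, sum_add_distrib, sum_const, card_univ,
    Fintype.card_fin, nsmul_eq_mul]

end Excess

section Entries

variable {m n p : ℕ}

lemma mem_entries {v : Fin n → ℝ} {x : ℝ} : x ∈ entries v ↔ ∃ i, v i = x := by
  simp [entries]

lemma excess_eq_sum_map_entries (v : Fin n → ℝ) (t : ℝ) :
    excess v t = ((entries v).map fun x => (x - t)⁺).sum := by
  rw [entries, Multiset.map_map]
  rfl

lemma excess_of_entries_eq_abs_add {Z : Fin p → ℝ} {a : Fin m → ℝ} {b : Fin n → ℝ}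
    (h : entries Z = entries (fun i => |a i|) + entries b) {t : ℝ} (ht : 0 ≤ t) :
    excess Z t = excess a t + excess a (-t) - (∑ i, a i + m * t) + excess b t := by
  rw [← excess_abs a ht, excess_eq_sum_map_entries, h, Multiset.map_add, Multiset.sum_add,
    ← excess_eq_sum_map_entries, ← excess_eq_sum_map_entries]

lemma nonneg_of_entries_eq_abs_add {Z : Fin p → ℝ} {a : Fin m → ℝ} {b : Fin n → ℝ}
    (h : entries Z = entries (fun i => |a i|) + entries b) (hb : ∀ i, 0 ≤ b i) (j : Fin p) :
    0 ≤ Z j := by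
  have hj : Z j ∈ entries Z := mem_entries.2 ⟨j, rfl⟩
  rw [h, Multiset.mem_add, mem_entries, mem_entries] at hj
  rcases hj with ⟨i, hi⟩ | ⟨i, hi⟩ <;> rw [← hi]
  exacts [abs_nonneg _, hb i]

end Entries

theorem stmt1_general (n₁ n₂ : ℕ)
    (μ μ' : Fin n₁ → ℝ) (ν ν' : Fin n₂ → ℝ)
    (hμ : Antitone μ)
    (hν : Antitone ν)
    (hν0 : ∀ i, 0 ≤ ν i) (hν'0 : ∀ i, 0 ≤ ν' i)
    (hμps : ∀ k, 1 ≤ k → k ≤ n₁ → psum μ k ≤ psum μ' k)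
    (hμeq : psum μ n₁ = psum μ' n₁)
    (hνps : ∀ k, 1 ≤ k → k ≤ n₂ → psum ν k ≤ psum ν' k)
    (Ξ Ξ' : Fin (n₁ + n₂) → ℝ)
    (hΞ'mono : Antitone Ξ')
    (hΞ : entries Ξ = entries (fun i => |μ i|) + entries ν)
    (hΞ' : entries Ξ' = entries (fun i => |μ' i|) + entries ν') :
    (∀ k, 1 ≤ k → k ≤ n₁ + n₂ → psum Ξ k ≤ psum Ξ' k) ∧
      (Ξ = Ξ' → μ = μ' ∧ ν = ν') := by
  have hμle := psum_le_psum_of_forall_one_le hμps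
  have hνle := psum_le_psum_of_forall_one_le hνps
  have hμex := excess_le_excess_of_psum_le hμ hμle
  have hνex := excess_le_excess_of_psum_le hν hνle
  have hsum : ∑ i, μ i = ∑ i, μ' i := by rwa [← psum_self, ← psum_self]
  have hΞex : ∀ t, 0 ≤ t → excess Ξ t ≤ excess Ξ' t := fun t ht => by
    rw [excess_of_entries_eq_abs_add hΞ ht, excess_of_entries_eq_abs_add hΞ' ht, hsum]
    linarith [hμex t, hμex (-t), hνex t]
  refine ⟨fun k hk₁ hk => ?_, ?_⟩
  · obtain ⟨i, rfl⟩ : ∃ i : Fin (n₁ + n₂), k = i + 1 := ⟨⟨k - 1, by omega⟩, by simp; omega⟩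
    exact psum_succ_le_of_excess_le hΞ'mono i (hΞex _ (nonneg_of_entries_eq_abs_add hΞ' hν'0 i))
  · rintro rfl
    have hparts : ∀ t, 0 ≤ t →
        excess μ' t ≤ excess μ t ∧ excess μ' (-t) ≤ excess μ (-t) ∧ excess ν' t ≤ excess ν t :=
      fun t ht => by
        have h := (excess_of_entries_eq_abs_add hΞ ht).symm.trans
          (excess_of_entries_eq_abs_add hΞ' ht)
        rw [hsum] at h
        exact ⟨by linarith [hμex (-t), hνex t], by linarith [hμex t, hνex t],
          by linarith [hμex t, hμex (-t)]⟩
    refine ⟨eq_of_psum_le_of_excess_le hμ hμle fun i => ?_,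
      eq_of_psum_le_of_excess_le hν hνle fun i => (hparts _ (hν0 i)).2.2⟩
    rcases le_total 0 (μ i) with h | h
    · exact (hparts _ h).1
    · simpa using (hparts _ (neg_nonneg.2 h)).2.1

theorem stmt1 (n₁ n₂ : ℕ) (hn₁ : 1 ≤ n₁)
    (μ μ' : Fin n₁ → ℝ) (ν ν' : Fin n₂ → ℝ)
    (hμ : Antitone μ) (hμ' : Antitone μ')
    (hν : Antitone ν) (hν' : Antitone ν')
    (hν0 : ∀ i, 0 ≤ ν i) (hν'0 : ∀ i, 0 ≤ ν' i)
    (hμps : ∀ k, 1 ≤ k → k ≤ n₁ → psum μ k ≤ psum μ' k)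
    (hμeq : psum μ n₁ = psum μ' n₁)
    (hνps : ∀ k, 1 ≤ k → k ≤ n₂ → psum ν k ≤ psum ν' k)
    (Ξ Ξ' : Fin (n₁ + n₂) → ℝ)
    (hΞmono : Antitone Ξ) (hΞ'mono : Antitone Ξ')
    (hΞ : entries Ξ = entries (fun i => |μ i|) + entries ν)
    (hΞ' : entries Ξ' = entries (fun i => |μ' i|) + entries ν') :
    (∀ k, 1 ≤ k → k ≤ n₁ + n₂ → psum Ξ k ≤ psum Ξ' k) ∧
      (Ξ = Ξ' → μ = μ' ∧ ν = ν') :=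
  stmt1_general n₁ n₂ μ μ' ν ν' hμ hν hν0 hν'0 hμps hμeq hνps Ξ Ξ' hΞ'mono hΞ hΞ'
end
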